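/- Define q₋ := p(ρ₁) - p(ρ₋) and q₊ := p(ρ₊) - p(ρ₁) and suppose 0 < ρ₋ < ρ₁ < ρ₊, q₋, q₊ > 0, C₁ > 1. If q₊·(ρ₊ - ρ₁)/ρ₁ > ((C₁-1)/2)·ρ₊ and q₋·(ρ₁ - ρ₋)/ρ₁ > ((C₁-1)/2)·ρ₋, then for every ε > 0 there exists a smooth function f : (0,∞) → (0,∞) with ∫_{ρ₋}^{ρ₁} f = q₋, ∫_{ρ₁}^{ρ₊} f = q₊, ∫_{ρ₁}^{ρ₊}∫_{ρ₁}^τ f(r)/r dr dτ > q₊(ρ₊-ρ₁)/ρ₁ - ε and ∫_{ρ₋}^{ρ₁}∫_τ^{ρ₁} f(r)/r dr dτ > q₋(ρ₁-ρ₋)/ρ₁ - ε. -/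

import Mathlib

open MeasureTheory Set Filter Metric intervalIntegral Real
open scoped Topology

/-- Integral of the Cauchy kernel `n/(1+(n(r-c))²)` over an interval. -/
lemma cauchy_integral_aux (n c α β : ℝ) (hn : n ≠ 0) :
    ∫ r in α..β, n * (1 + (n * (r - c))^2)⁻¹
      = Real.arctan (n*(β-c)) - Real.arctan (n*(α-c)) := by
  have h : ∀ r : ℝ, n * (1 + (n * (r - c))^2)⁻¹
      = n * ((fun y : ℝ => (1 + y^2)⁻¹) (n * r + (-(n*c)))) := by
    intro r
    simp only
    congr 2
    ring
  simp_rw [h]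
  rw [intervalIntegral.integral_const_mul,
    intervalIntegral.integral_comp_mul_add (fun y : ℝ => (1 + y^2)⁻¹) hn (-(n*c)),
    integral_inv_one_add_sq, smul_eq_mul]
  have e1 : n*(β-c) = n*β + -(n*c) := by ring
  have e2 : n*(α-c) = n*α + -(n*c) := by ring
  rw [e1, e2, ← mul_assoc, mul_inv_cancel₀ hn, one_mul]

lemma solve2x2_L (qm qp Ak Bk Ck Dk : ℝ) (hdet : 0 < Ak*Dk - Bk*Ck) :
    (Dk*qm - Bk*qp)/(Ak*Dk - Bk*Ck) * Ak + (Ak*qp - Ck*qm)/(Ak*Dk - Bk*Ck) * Bk = qm := by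
  rw [div_mul_eq_mul_div, div_mul_eq_mul_div, ← add_div, div_eq_iff hdet.ne']
  ring

lemma solve2x2_R (qm qp Ak Bk Ck Dk : ℝ) (hdet : 0 < Ak*Dk - Bk*Ck) :
    (Dk*qm - Bk*qp)/(Ak*Dk - Bk*Ck) * Ck + (Ak*qp - Ck*qm)/(Ak*Dk - Bk*Ck) * Dk = qp := by
  rw [div_mul_eq_mul_div, div_mul_eq_mul_div, ← add_div, div_eq_iff hdet.ne']
  ring

set_option maxHeartbeats 2000000 in
theorem stmt19 (ρm ρ₁ ρp qm qp C₁ : ℝ)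
    (h1 : 0 < ρm) (h2 : ρm < ρ₁) (h3 : ρ₁ < ρp)
    (hqm : 0 < qm) (hqp : 0 < qp) (hC : 1 < C₁)
    (hineqp : qp * (ρp - ρ₁) / ρ₁ > (C₁ - 1)/2 * ρp)
    (hineqm : qm * (ρ₁ - ρm) / ρ₁ > (C₁ - 1)/2 * ρm) :
    ∀ ε > 0, ∃ f : ℝ → ℝ,
      ContDiffOn ℝ (⊤ : ℕ∞) f (Set.Ioi 0) ∧
      (∀ x > 0, 0 < f x) ∧
      (∫ r in ρm..ρ₁, f r) = qm ∧
      (∫ r in ρ₁..ρp, f r) = qp ∧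
      (∫ τ in ρ₁..ρp, ∫ r in ρ₁..τ, f r / r) > qp * (ρp - ρ₁) / ρ₁ - ε ∧
      (∫ τ in ρm..ρ₁, ∫ r in τ..ρ₁, f r / r) > qm * (ρ₁ - ρm) / ρ₁ - ε := by
  intro ε hε
  have hρ₁ : (0:ℝ) < ρ₁ := h1.trans h2
  -- ## step 1 : choose a small δ
  have t0 : Tendsto (fun δ : ℝ => δ) (𝓝[>] (0:ℝ)) (𝓝 0) :=
    Filter.tendsto_id.mono_right nhdsWithin_le_nhds
  have e1 : ∀ᶠ δ : ℝ in 𝓝[>] (0:ℝ), 0 < δ := eventually_mem_nhdsWithin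
  have e2 : ∀ᶠ δ : ℝ in 𝓝[>] (0:ℝ), 2*δ < ρ₁ - ρm :=
    (t0.const_mul 2).eventually (eventually_lt_nhds (by linarith : 2*(0:ℝ) < ρ₁ - ρm))
  have e3 : ∀ᶠ δ : ℝ in 𝓝[>] (0:ℝ), 2*δ < ρp - ρ₁ :=
    (t0.const_mul 2).eventually (eventually_lt_nhds (by linarith : 2*(0:ℝ) < ρp - ρ₁))
  have e4 : ∀ᶠ δ : ℝ in 𝓝[>] (0:ℝ),
      qp*(ρp-ρ₁)/ρ₁ - ε < (ρp-ρ₁-2*δ)*qp/(ρ₁+2*δ) := by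
    have hnum : Tendsto (fun δ : ℝ => (ρp-ρ₁-2*δ)*qp) (𝓝[>] (0:ℝ))
        (𝓝 ((ρp-ρ₁-2*0)*qp)) :=
      (tendsto_const_nhds.sub (t0.const_mul 2)).mul_const qp
    have hden : Tendsto (fun δ : ℝ => ρ₁+2*δ) (𝓝[>] (0:ℝ)) (𝓝 (ρ₁+2*0)) :=
      tendsto_const_nhds.add (t0.const_mul 2)
    have hlim := hnum.div hden (by norm_num; linarith)
    refine hlim.eventually (eventually_gt_nhds ?_)
    have hv : (ρp-ρ₁-2*0)*qp/(ρ₁+2*0) = qp*(ρp-ρ₁)/ρ₁ := by ring_nf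
    rw [hv]; linarith
  have e5 : ∀ᶠ δ : ℝ in 𝓝[>] (0:ℝ),
      qm*(ρ₁-ρm)/ρ₁ - ε < (ρ₁-ρm-2*δ)*qm/ρ₁ := by
    have hnum : Tendsto (fun δ : ℝ => (ρ₁-ρm-2*δ)*qm) (𝓝[>] (0:ℝ))
        (𝓝 ((ρ₁-ρm-2*0)*qm)) :=
      (tendsto_const_nhds.sub (t0.const_mul 2)).mul_const qm
    have hlim := hnum.div_const ρ₁
    refine hlim.eventually (eventually_gt_nhds ?_)
    have hv : (ρ₁-ρm-2*0)*qm/ρ₁ = qm*(ρ₁-ρm)/ρ₁ := by ring_nf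
    rw [hv]; linarith
  obtain ⟨δ, ⟨⟨⟨⟨hδ0, hδL⟩, hδR⟩, hεp⟩, hεm⟩⟩ :=
    ((((e1.and e2).and e3).and e4).and e5).exists
  -- ## step 2 : the two spike centers and the four arctan quantities
  set cL : ℝ := ρ₁ - δ with hcL
  set cR : ℝ := ρ₁ + δ with hcR
  set A : ℝ → ℝ := fun k => arctan (k*(ρ₁-cL)) - arctan (k*(ρm-cL)) with hA
  set B : ℝ → ℝ := fun k => arctan (k*(ρ₁-cR)) - arctan (k*(ρm-cR)) with hB
  set C : ℝ → ℝ := fun k => arctan (k*(ρp-cL)) - arctan (k*(ρ₁-cL)) with hC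
  set D : ℝ → ℝ := fun k => arctan (k*(ρp-cR)) - arctan (k*(ρ₁-cR)) with hD
  set E : ℝ → ℝ := fun k => arctan (k*δ) - arctan (k*(-δ)) with hE
  set av : ℝ → ℝ := fun k => (D k * qm - B k * qp)/(A k * D k - B k * C k) with hav
  set bv : ℝ → ℝ := fun k => (A k * qp - C k * qm)/(A k * D k - B k * C k) with hbv
  -- limits as k → ∞
  have harctP : ∀ x : ℝ, 0 < x →
      Tendsto (fun k : ℝ => arctan (k*x)) atTop (𝓝 (π/2)) := by
    intro x hx
    have h1 : Tendsto (fun k : ℝ => k*x) atTop atTop :=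
      Filter.tendsto_id.atTop_mul_const hx
    exact (Real.tendsto_arctan_atTop.mono_right nhdsWithin_le_nhds).comp h1
  have harctN : ∀ x : ℝ, x < 0 →
      Tendsto (fun k : ℝ => arctan (k*x)) atTop (𝓝 (-(π/2))) := by
    intro x hx
    have h1 : Tendsto (fun k : ℝ => k*x) atTop atBot :=
      Filter.Tendsto.atTop_mul_const_of_neg hx Filter.tendsto_id
    exact (Real.tendsto_arctan_atBot.mono_right nhdsWithin_le_nhds).comp h1
  have hAlim : Tendsto A atTop (𝓝 (π/2 - -(π/2))) :=
    (harctP _ (by rw [hcL]; linarith)).sub (harctN _ (by rw [hcL]; linarith))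
  have hBlim : Tendsto B atTop (𝓝 (-(π/2) - -(π/2))) :=
    (harctN _ (by rw [hcR]; linarith)).sub (harctN _ (by rw [hcR]; linarith))
  have hClim : Tendsto C atTop (𝓝 (π/2 - π/2)) :=
    (harctP _ (by rw [hcL]; linarith)).sub (harctP _ (by rw [hcL]; linarith))
  have hDlim : Tendsto D atTop (𝓝 (π/2 - -(π/2))) :=
    (harctP _ (by rw [hcR]; linarith)).sub (harctN _ (by rw [hcR]; linarith))
  have hElim : Tendsto E atTop (𝓝 (π/2 - -(π/2))) :=
    (harctP _ hδ0).sub (harctN _ (by linarith))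
  have hπ : (0:ℝ) < π := Real.pi_pos
  have hDetlim : Tendsto (fun k => A k * D k - B k * C k) atTop
      (𝓝 ((π/2 - -(π/2)) * (π/2 - -(π/2)) - (-(π/2) - -(π/2)) * (π/2 - π/2))) :=
    (hAlim.mul hDlim).sub (hBlim.mul hClim)
  have hDetpos : (0:ℝ) < (π/2 - -(π/2)) * (π/2 - -(π/2)) - (-(π/2) - -(π/2)) * (π/2 - π/2) := by
    nlinarith [hπ]
  have havlim : Tendsto av atTop
      (𝓝 (((π/2 - -(π/2)) * qm - (-(π/2) - -(π/2)) * qp) /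
        ((π/2 - -(π/2)) * (π/2 - -(π/2)) - (-(π/2) - -(π/2)) * (π/2 - π/2)))) :=
    ((hDlim.mul_const qm).sub (hBlim.mul_const qp)).div hDetlim hDetpos.ne'
  have hbvlim : Tendsto bv atTop
      (𝓝 (((π/2 - -(π/2)) * qp - (π/2 - π/2) * qm) /
        ((π/2 - -(π/2)) * (π/2 - -(π/2)) - (-(π/2) - -(π/2)) * (π/2 - π/2)))) :=
    ((hAlim.mul_const qp).sub (hClim.mul_const qm)).div hDetlim hDetpos.ne'
  -- eventual properties in k
  have n1 : ∀ᶠ k : ℝ in atTop, 0 < k := eventually_gt_atTop 0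
  have n2 : ∀ᶠ k : ℝ in atTop, 0 < A k * D k - B k * C k :=
    hDetlim.eventually (eventually_gt_nhds hDetpos)
  have n3 : ∀ᶠ k : ℝ in atTop, 0 < av k := by
    refine havlim.eventually (eventually_gt_nhds ?_)
    apply div_pos _ hDetpos
    nlinarith [hπ]
  have n4 : ∀ᶠ k : ℝ in atTop, 0 < bv k := by
    refine hbvlim.eventually (eventually_gt_nhds ?_)
    apply div_pos _ hDetpos
    nlinarith [hπ]
  have n5 : ∀ᶠ k : ℝ in atTop,
      qp*(ρp-ρ₁)/ρ₁ - ε < (ρp-(ρ₁+2*δ)) * (bv k/(ρ₁+2*δ) * E k) := by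
    have hlim : Tendsto (fun k => (ρp-(ρ₁+2*δ)) * (bv k/(ρ₁+2*δ) * E k)) atTop
        (𝓝 ((ρp-(ρ₁+2*δ)) * ((((π/2 - -(π/2)) * qp - (π/2 - π/2) * qm) /
          ((π/2 - -(π/2)) * (π/2 - -(π/2)) - (-(π/2) - -(π/2)) * (π/2 - π/2)))/(ρ₁+2*δ)
            * (π/2 - -(π/2))))) :=
      ((hbvlim.div_const (ρ₁+2*δ)).mul hElim).const_mul (ρp-(ρ₁+2*δ))
    refine hlim.eventually (eventually_gt_nhds ?_)
    have hval : (ρp-(ρ₁+2*δ)) * ((((π/2 - -(π/2)) * qp - (π/2 - π/2) * qm) /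
        ((π/2 - -(π/2)) * (π/2 - -(π/2)) - (-(π/2) - -(π/2)) * (π/2 - π/2)))/(ρ₁+2*δ)
          * (π/2 - -(π/2))) = (ρp-ρ₁-2*δ)*qp/(ρ₁+2*δ) := by
      have hπ' : π ≠ 0 := hπ.ne'
      have hd : ρ₁+2*δ ≠ 0 := by positivity
      field_simp
      ring
    rw [hval]; linarith
  have n6 : ∀ᶠ k : ℝ in atTop,
      qm*(ρ₁-ρm)/ρ₁ - ε < (ρ₁-2*δ-ρm) * (av k/ρ₁ * E k) := by
    have hlim : Tendsto (fun k => (ρ₁-2*δ-ρm) * (av k/ρ₁ * E k)) atTop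
        (𝓝 ((ρ₁-2*δ-ρm) * ((((π/2 - -(π/2)) * qm - (-(π/2) - -(π/2)) * qp) /
          ((π/2 - -(π/2)) * (π/2 - -(π/2)) - (-(π/2) - -(π/2)) * (π/2 - π/2)))/ρ₁
            * (π/2 - -(π/2))))) :=
      ((havlim.div_const ρ₁).mul hElim).const_mul (ρ₁-2*δ-ρm)
    refine hlim.eventually (eventually_gt_nhds ?_)
    have hval : (ρ₁-2*δ-ρm) * ((((π/2 - -(π/2)) * qm - (-(π/2) - -(π/2)) * qp) /
        ((π/2 - -(π/2)) * (π/2 - -(π/2)) - (-(π/2) - -(π/2)) * (π/2 - π/2)))/ρ₁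
          * (π/2 - -(π/2))) = (ρ₁-ρm-2*δ)*qm/ρ₁ := by
      have hπ' : π ≠ 0 := hπ.ne'
      have hd : ρ₁ ≠ 0 := hρ₁.ne'
      field_simp
      ring
    rw [hval]; linarith
  obtain ⟨n, ⟨⟨⟨⟨⟨hn0, hDet⟩, ha0⟩, hb0⟩, hKp⟩, hKm⟩⟩ :=
    (((((n1.and n2).and n3).and n4).and n5).and n6).exists
  -- ## step 3 : the function f
  set gL : ℝ → ℝ := fun r => n * (1 + (n * (r - cL))^2)⁻¹ with hgL
  set gR : ℝ → ℝ := fun r => n * (1 + (n * (r - cR))^2)⁻¹ with hgR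
  set f : ℝ → ℝ := fun r => av n * gL r + bv n * gR r with hf
  have hgLpos : ∀ r : ℝ, 0 < gL r := fun r => by
    rw [hgL]; exact mul_pos hn0 (inv_pos.mpr (by positivity))
  have hgRpos : ∀ r : ℝ, 0 < gR r := fun r => by
    rw [hgR]; exact mul_pos hn0 (inv_pos.mpr (by positivity))
  have hfpos : ∀ r : ℝ, 0 < f r := fun r => by
    rw [hf]
    have := mul_pos ha0 (hgLpos r)
    have := mul_pos hb0 (hgRpos r)
    simp only
    linarith
  have hgLcont : Continuous gL := by
    rw [hgL]
    exact continuous_const.mul ((continuous_const.add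
      ((continuous_const.mul (continuous_id.sub continuous_const)).pow 2)).inv₀
        (fun x => (by positivity : (0:ℝ) < 1 + (n * (x - cL))^2).ne'))
  have hgRcont : Continuous gR := by
    rw [hgR]
    exact continuous_const.mul ((continuous_const.add
      ((continuous_const.mul (continuous_id.sub continuous_const)).pow 2)).inv₀
        (fun x => (by positivity : (0:ℝ) < 1 + (n * (x - cR))^2).ne'))
  have hfc : Continuous f := by
    rw [hf]
    exact (continuous_const.mul hgLcont).add (continuous_const.mul hgRcont)
  have hfsmooth : ContDiffOn ℝ (⊤ : ℕ∞) f (Set.Ioi 0) := by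
    apply ContDiff.contDiffOn
    rw [hf]
    have hker : ∀ c : ℝ, ContDiff ℝ (⊤ : ℕ∞) (fun r : ℝ => n * (1 + (n * (r - c))^2)⁻¹) := by
      intro c
      apply ContDiff.mul contDiff_const
      apply ContDiff.inv
      · exact contDiff_const.add ((contDiff_const.mul (contDiff_id.sub contDiff_const)).pow 2)
      · intro x; positivity
    exact (contDiff_const.mul (hker cL)).add (contDiff_const.mul (hker cR))
  -- interval integrals of the spikes
  have hgLint : ∀ α β : ℝ, ∫ r in α..β, gL r = arctan (n*(β-cL)) - arctan (n*(α-cL)) := by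
    intro α β
    rw [hgL]
    exact cauchy_integral_aux n cL α β hn0.ne'
  have hgRint : ∀ α β : ℝ, ∫ r in α..β, gR r = arctan (n*(β-cR)) - arctan (n*(α-cR)) := by
    intro α β
    rw [hgR]
    exact cauchy_integral_aux n cR α β hn0.ne'
  have hgLii : ∀ α β : ℝ, IntervalIntegrable gL volume α β :=
    fun α β => hgLcont.intervalIntegrable α β
  have hgRii : ∀ α β : ℝ, IntervalIntegrable gR volume α β :=
    fun α β => hgRcont.intervalIntegrable α β
  have hfint : ∀ α β : ℝ, ∫ r in α..β, f r
      = av n * (arctan (n*(β-cL)) - arctan (n*(α-cL)))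
        + bv n * (arctan (n*(β-cR)) - arctan (n*(α-cR))) := by
    intro α β
    have : ∫ r in α..β, f r = (∫ r in α..β, av n * gL r) + ∫ r in α..β, bv n * gR r := by
      rw [← intervalIntegral.integral_add ((hgLii α β).const_mul _) ((hgRii α β).const_mul _)]
    rw [this, intervalIntegral.integral_const_mul, hgLint α β,
      intervalIntegral.integral_const_mul, hgRint α β]
  -- the two exact integral constraints
  have hintL : ∫ r in ρm..ρ₁, f r = qm := by
    rw [hfint]
    have h1' : arctan (n*(ρ₁-cL)) - arctan (n*(ρm-cL)) = A n := by rw [hA]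
    have h2' : arctan (n*(ρ₁-cR)) - arctan (n*(ρm-cR)) = B n := by rw [hB]
    rw [h1', h2']
    simp only [hav, hbv]
    exact solve2x2_L qm qp (A n) (B n) (C n) (D n) hDet
  have hintR : ∫ r in ρ₁..ρp, f r = qp := by
    rw [hfint]
    have h1' : arctan (n*(ρp-cL)) - arctan (n*(ρ₁-cL)) = C n := by rw [hC]
    have h2' : arctan (n*(ρp-cR)) - arctan (n*(ρ₁-cR)) = D n := by rw [hD]
    rw [h1', h2']
    simp only [hav, hbv]
    exact solve2x2_R qm qp (A n) (B n) (C n) (D n) hDet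
  -- ## step 4 : the double integral bounds
  set φ : ℝ → ℝ := fun r => f r / r with hφ
  have hφnn : ∀ r : ℝ, 0 < r → 0 ≤ φ r := fun r hr => by
    rw [hφ]; exact div_nonneg (hfpos r).le hr.le
  have hφcont : ContinuousOn φ (Set.Ioi 0) := by
    rw [hφ]
    exact hfc.continuousOn.div continuousOn_id (fun x hx => ne_of_gt hx)
  have hφii : ∀ α β : ℝ, 0 < α → 0 < β → IntervalIntegrable φ volume α β := by
    intro α β hα hβ
    apply ContinuousOn.intervalIntegrable
    exact hφcont.mono (fun x hx => lt_of_lt_of_le (lt_min hα hβ) hx.1)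
  -- ### right-hand double integral
  set m : ℝ := ρ₁ + 2*δ with hm
  have hρ₁m : ρ₁ ≤ m := by rw [hm]; linarith
  have hmρp : m ≤ ρp := by rw [hm]; linarith
  have hm0 : 0 < m := by rw [hm]; linarith
  set F : ℝ → ℝ := fun τ => ∫ r in ρ₁..τ, φ r with hF
  have hφIcc : IntegrableOn φ (uIcc ρ₁ ρp) volume := by
    rw [uIcc_of_le h3.le]
    apply ContinuousOn.integrableOn_Icc
    exact hφcont.mono (fun x hx => lt_of_lt_of_le hρ₁ hx.1)
  have hFcont : ContinuousOn F (uIcc ρ₁ ρp) := by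
    rw [hF]; exact continuousOn_primitive_interval hφIcc
  have hFii1 : IntervalIntegrable F volume ρ₁ m := by
    apply ContinuousOn.intervalIntegrable
    apply hFcont.mono
    rw [uIcc_of_le h3.le, uIcc_of_le hρ₁m]
    exact Icc_subset_Icc le_rfl hmρp
  have hFii2 : IntervalIntegrable F volume m ρp := by
    apply ContinuousOn.intervalIntegrable
    apply hFcont.mono
    rw [uIcc_of_le h3.le, uIcc_of_le hmρp]
    exact Icc_subset_Icc hρ₁m le_rfl
  set Kp : ℝ := bv n/(ρ₁+2*δ) * E n with hKpdef
  have hFK : ∀ τ ∈ Icc m ρp, Kp ≤ F τ := by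
    intro τ hτ
    have hρ₁τ : ρ₁ ≤ τ := le_trans hρ₁m hτ.1
    have hτ0 : 0 < τ := lt_of_lt_of_le hρ₁ hρ₁τ
    have hsplit : F τ = (∫ r in ρ₁..m, φ r) + ∫ r in m..τ, φ r := by
      rw [hF]
      exact (intervalIntegral.integral_add_adjacent_intervals
        (hφii ρ₁ m hρ₁ hm0) (hφii m τ hm0 hτ0)).symm
    have h2nd : 0 ≤ ∫ r in m..τ, φ r :=
      intervalIntegral.integral_nonneg hτ.1 (fun u hu => hφnn u (lt_of_lt_of_le hm0 hu.1))
    have hptw : ∀ r ∈ Icc ρ₁ m, bv n/(ρ₁+2*δ) * gR r ≤ φ r := by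
      intro r hr
      have h0r : 0 < r := lt_of_lt_of_le hρ₁ hr.1
      have hfr0 : 0 ≤ f r := (hfpos r).le
      have hfge : bv n * gR r ≤ f r := by
        have := mul_pos ha0 (hgLpos r)
        rw [hf]
        simp only
        linarith
      have hrm : r ≤ ρ₁+2*δ := by
        have := hr.2
        rw [hm] at this
        exact this
      calc bv n/(ρ₁+2*δ) * gR r = bv n * gR r/(ρ₁+2*δ) := by ring
        _ ≤ f r / r := div_le_div₀ hfr0 hfge h0r hrm
        _ = φ r := by rw [hφ]
    have h1st : Kp ≤ ∫ r in ρ₁..m, φ r := by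
      have hmono := intervalIntegral.integral_mono_on hρ₁m
        ((hgRii ρ₁ m).const_mul (bv n/(ρ₁+2*δ))) (hφii ρ₁ m hρ₁ hm0) hptw
      rw [intervalIntegral.integral_const_mul, hgRint ρ₁ m] at hmono
      have harg : bv n/(ρ₁+2*δ) * (arctan (n*(m-cR)) - arctan (n*(ρ₁-cR))) = Kp := by
        rw [hKpdef, hE, hm, hcR]
        ring_nf
      rwa [harg] at hmono
    linarith [hsplit, h1st, h2nd, le_of_eq hsplit.symm]
  have hDR : (ρp - m) * Kp ≤ ∫ τ in ρ₁..ρp, F τ := by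
    have hsplit : (∫ τ in ρ₁..ρp, F τ) = (∫ τ in ρ₁..m, F τ) + ∫ τ in m..ρp, F τ :=
      (intervalIntegral.integral_add_adjacent_intervals hFii1 hFii2).symm
    have hchunk1 : 0 ≤ ∫ τ in ρ₁..m, F τ := by
      apply intervalIntegral.integral_nonneg hρ₁m
      intro τ hτ
      rw [hF]
      exact intervalIntegral.integral_nonneg hτ.1
        (fun u hu => hφnn u (lt_of_lt_of_le hρ₁ hu.1))
    have hchunk2 : (ρp - m) * Kp ≤ ∫ τ in m..ρp, F τ := by
      have := intervalIntegral.integral_mono_on hmρp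
        (intervalIntegrable_const (c := Kp)) hFii2 (fun τ hτ => hFK τ hτ)
      rwa [intervalIntegral.integral_const, smul_eq_mul] at this
    linarith
  have goalR : (∫ τ in ρ₁..ρp, ∫ r in ρ₁..τ, f r / r) > qp * (ρp - ρ₁) / ρ₁ - ε := by
    have heq : (∫ τ in ρ₁..ρp, ∫ r in ρ₁..τ, f r / r) = ∫ τ in ρ₁..ρp, F τ := by
      simp only [hF, hφ]
    rw [heq]
    exact lt_of_lt_of_le hKp hDR
  -- ### left-hand double integral
  set m2 : ℝ := ρ₁ - 2*δ with hm2
  have hρmm2 : ρm ≤ m2 := by rw [hm2]; linarith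
  have hm2ρ₁ : m2 ≤ ρ₁ := by rw [hm2]; linarith
  have hm20 : 0 < m2 := by rw [hm2]; linarith
  set G : ℝ → ℝ := fun τ => ∫ r in τ..ρ₁, φ r with hG
  have hφIccL : IntegrableOn φ (uIcc ρm ρ₁) volume := by
    rw [uIcc_of_le h2.le]
    apply ContinuousOn.integrableOn_Icc
    exact hφcont.mono (fun x hx => lt_of_lt_of_le h1 hx.1)
  have hGcont : ContinuousOn G (uIcc ρm ρ₁) := by
    rw [hG]; exact continuousOn_primitive_interval_left hφIccL
  have hGii1 : IntervalIntegrable G volume ρm m2 := by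
    apply ContinuousOn.intervalIntegrable
    apply hGcont.mono
    rw [uIcc_of_le h2.le, uIcc_of_le hρmm2]
    exact Icc_subset_Icc le_rfl hm2ρ₁
  have hGii2 : IntervalIntegrable G volume m2 ρ₁ := by
    apply ContinuousOn.intervalIntegrable
    apply hGcont.mono
    rw [uIcc_of_le h2.le, uIcc_of_le hm2ρ₁]
    exact Icc_subset_Icc hρmm2 le_rfl
  set Km : ℝ := av n/ρ₁ * E n with hKmdef
  have hGK : ∀ τ ∈ Icc ρm m2, Km ≤ G τ := by
    intro τ hτ
    have hτ0 : 0 < τ := lt_of_lt_of_le h1 hτ.1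
    have hτρ₁ : τ ≤ ρ₁ := le_trans hτ.2 hm2ρ₁
    have hsplit : G τ = (∫ r in τ..m2, φ r) + ∫ r in m2..ρ₁, φ r := by
      rw [hG]
      exact (intervalIntegral.integral_add_adjacent_intervals
        (hφii τ m2 hτ0 hm20) (hφii m2 ρ₁ hm20 hρ₁)).symm
    have h1stnn : 0 ≤ ∫ r in τ..m2, φ r :=
      intervalIntegral.integral_nonneg hτ.2 (fun u hu => hφnn u (lt_of_lt_of_le hτ0 hu.1))
    have hptw : ∀ r ∈ Icc m2 ρ₁, av n/ρ₁ * gL r ≤ φ r := by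
      intro r hr
      have h0r : 0 < r := lt_of_lt_of_le hm20 hr.1
      have hfr0 : 0 ≤ f r := (hfpos r).le
      have hfge : av n * gL r ≤ f r := by
        have := mul_pos hb0 (hgRpos r)
        rw [hf]
        simp only
        linarith
      calc av n/ρ₁ * gL r = av n * gL r/ρ₁ := by ring
        _ ≤ f r / r := div_le_div₀ hfr0 hfge h0r hr.2
        _ = φ r := by rw [hφ]
    have h2nd : Km ≤ ∫ r in m2..ρ₁, φ r := by
      have hmono := intervalIntegral.integral_mono_on hm2ρ₁
        ((hgLii m2 ρ₁).const_mul (av n/ρ₁)) (hφii m2 ρ₁ hm20 hρ₁) hptw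
      rw [intervalIntegral.integral_const_mul, hgLint m2 ρ₁] at hmono
      have harg : av n/ρ₁ * (arctan (n*(ρ₁-cL)) - arctan (n*(m2-cL))) = Km := by
        rw [hKmdef, hE, hm2, hcL]
        ring_nf
      rwa [harg] at hmono
    linarith [hsplit, h1stnn, h2nd]
  have hDL : (m2 - ρm) * Km ≤ ∫ τ in ρm..ρ₁, G τ := by
    have hsplit : (∫ τ in ρm..ρ₁, G τ) = (∫ τ in ρm..m2, G τ) + ∫ τ in m2..ρ₁, G τ :=
      (intervalIntegral.integral_add_adjacent_intervals hGii1 hGii2).symm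
    have hchunk2 : 0 ≤ ∫ τ in m2..ρ₁, G τ := by
      apply intervalIntegral.integral_nonneg hm2ρ₁
      intro τ hτ
      rw [hG]
      exact intervalIntegral.integral_nonneg hτ.2
        (fun u hu => hφnn u (lt_of_lt_of_le (lt_of_lt_of_le hm20 hτ.1) hu.1))
    have hchunk1 : (m2 - ρm) * Km ≤ ∫ τ in ρm..m2, G τ := by
      have := intervalIntegral.integral_mono_on hρmm2
        (intervalIntegrable_const (c := Km)) hGii1 (fun τ hτ => hGK τ hτ)
      rwa [intervalIntegral.integral_const, smul_eq_mul] at this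
    linarith
  have goalL : (∫ τ in ρm..ρ₁, ∫ r in τ..ρ₁, f r / r) > qm * (ρ₁ - ρm) / ρ₁ - ε := by
    have heq : (∫ τ in ρm..ρ₁, ∫ r in τ..ρ₁, f r / r) = ∫ τ in ρm..ρ₁, G τ := by
      simp only [hG, hφ]
    rw [heq]
    exact lt_of_lt_of_le hKm hDL
  exact ⟨f, hfsmooth, fun x _ => hfpos x, hintL, hintR, goalR, goalL⟩
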